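/- arXiv:1505.06985 — 8 statements merged into one kernel-verified Lean document; each statement's English description precedes it below -/
import Mathlib

section
/- Let Q be an abelian group and let (F, Ω) be a normalized abelian 3-cocycle on Q with values in ℂ×, i.e. F: Q×Q×Q→ℂ× and Ω: Q×Q→ℂ× satisfy the pentagon condition F(i,j,k)F(i,j,k+l)⁻¹F(i,j+k,l)F(i+j,k,l)⁻¹F(j,k,l)=1, the hexagon conditions F(i,j,k)⁻¹Ω(i,j+k)F(j,k,i)⁻¹=Ω(i,j)F(j,i,k)⁻¹Ω(i,k) and F(i,j,k)Ω(i+j,k)F(k,i,j)=Ω(j,k)F(i,k,j)Ω(i,k), together with F(i,j,0)=F(i,0,j)=F(0,i,j)=1 and Ω(i,0)=Ω(0,i)=1. Define B(i,j,k)=F(j,i,k)⁻¹Ω(i,j)F(i,j,k). Then the map (F,Ω) ↦ B is injective: if B(i,j,k)=1 for all i,j,k ∈ Q, then F ≡ 1 and Ω ≡ 1. -/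
/-- If the associated function `B(i,j,k) = F(j,i,k)⁻¹ Ω(i,j) F(i,j,k)` of a normalized
abelian 3-cocycle `(F, Ω)` is identically 1, then `F ≡ 1` and `Ω ≡ 1`. -/
theorem na3_B_injective (Q : Type*) [AddCommGroup Q]
    (F : Q → Q → Q → ℂˣ) (Ω : Q → Q → ℂˣ)
    (hA1 : ∀ i j k l : Q,
      F i j k * (F i j (k + l))⁻¹ * F i (j + k) l * (F (i + j) k l)⁻¹ * F j k l = 1)
    (hA2 : ∀ i j k : Q,
      (F i j k)⁻¹ * Ω i (j + k) * (F j k i)⁻¹ = Ω i j * (F j i k)⁻¹ * Ω i k)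
    (hA3 : ∀ i j k : Q,
      F i j k * Ω (i + j) k * F k i j = Ω j k * F i k j * Ω i k)
    (hA4 : ∀ i j : Q, F i j 0 = 1 ∧ F i 0 j = 1 ∧ F 0 i j = 1)
    (hA5 : ∀ i : Q, Ω i 0 = 1 ∧ Ω 0 i = 1)
    (hB : ∀ i j k : Q, (F j i k)⁻¹ * Ω i j * F i j k = 1) :
    (∀ i j k : Q, F i j k = 1) ∧ (∀ i j : Q, Ω i j = 1) := by
  have hΩ : ∀ i j : Q, Ω i j = 1 := by
    intro i j
    have h := hB i j 0
    rw [(hA4 j i).1, (hA4 i j).1] at h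
    simpa using h
  have hsym : ∀ i j k : Q, F j i k = F i j k := by
    intro i j k
    have h := hB i j k
    rw [hΩ] at h
    have : (F j i k)⁻¹ * F i j k = 1 := by simpa using h
    exact inv_mul_eq_one.mp this
  have hF : ∀ i j k : Q, F i j k = 1 := by
    intro i j k
    have h := hA2 k i j
    rw [hΩ, hΩ, hΩ, hsym] at h
    have h' : (F k i j)⁻¹ * (F i j k)⁻¹ = (F k i j)⁻¹ := by simpa using h
    have h'' : (F k i j)⁻¹ * (F i j k)⁻¹ = (F k i j)⁻¹ * 1 := by simpa using h'
    have := mul_left_cancel h''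
    simpa using inv_injective this
  exact ⟨hF, hΩ⟩
end

section
/- Let Q be an abelian group and (F, Ω) a normalized abelian 3-cocycle with associated function B(i,j,k)=F(j,i,k)⁻¹Ω(i,j)F(i,j,k). Then for all i,j,k,l ∈ Q, F(i,j,k+l)⁻¹ · B(j,k,l) · B(i,k,j+l) · F(i,j,l) = B(i+j,k,l). -/
/-- For a normalized abelian 3-cocycle `(F, Ω)` with
`B(i,j,k) = F(j,i,k)⁻¹ Ω(i,j) F(i,j,k)`, one has
`F(i,j,k+l)⁻¹ B(j,k,l) B(i,k,j+l) F(i,j,l) = B(i+j,k,l)`. -/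
theorem na3_B_identity (Q : Type*) [AddCommGroup Q]
    (F : Q → Q → Q → ℂˣ) (Ω : Q → Q → ℂˣ)
    (hA1 : ∀ i j k l : Q,
      F i j k * (F i j (k + l))⁻¹ * F i (j + k) l * (F (i + j) k l)⁻¹ * F j k l = 1)
    (hA2 : ∀ i j k : Q,
      (F i j k)⁻¹ * Ω i (j + k) * (F j k i)⁻¹ = Ω i j * (F j i k)⁻¹ * Ω i k)
    (hA3 : ∀ i j k : Q,
      F i j k * Ω (i + j) k * F k i j = Ω j k * F i k j * Ω i k)
    (hA4 : ∀ i j : Q, F i j 0 = 1 ∧ F i 0 j = 1 ∧ F 0 i j = 1)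
    (hA5 : ∀ i : Q, Ω i 0 = 1 ∧ Ω 0 i = 1)
    (B : Q → Q → Q → ℂˣ)
    (hB : ∀ i j k : Q, B i j k = (F j i k)⁻¹ * Ω i j * F i j k) :
    ∀ i j k l : Q,
      (F i j (k + l))⁻¹ * B j k l * B i k (j + l) * F i j l = B (i + j) k l := by
  intro i j k l
  have e1 := congrArg (Units.val) (hA1 i j k l)
  have e2 := congrArg (Units.val) (hA1 i k j l)
  have e3 := congrArg (Units.val) (hA1 k i j l)
  have e4 := congrArg (Units.val) (hA3 i j k)
  rw [add_comm k j, add_comm i k] at e2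
  rw [Units.ext_iff]
  simp only [hB, Units.val_mul, Units.val_inv_eq_inv_val, Units.val_one] at e1 e2 e3 e4 ⊢
  trans (((F k (i+j) l : ℂ))⁻¹ * (Ω (i+j) k : ℂ) * (F (i+j) k l : ℂ)
      * ((F i j k : ℂ) * ((F i j (k+l) : ℂ))⁻¹ * (F i (j+k) l : ℂ) * ((F (i+j) k l : ℂ))⁻¹ * (F j k l : ℂ))
      * ((F i k j : ℂ) * ((F i k (j+l) : ℂ))⁻¹ * (F i (j+k) l : ℂ) * ((F (k+i) j l : ℂ))⁻¹ * (F k j l : ℂ))⁻¹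
      * ((F k i j : ℂ) * ((F k i (j+l) : ℂ))⁻¹ * (F k (i+j) l : ℂ) * ((F (k+i) j l : ℂ))⁻¹ * (F i j l : ℂ))
      * (((Ω j k : ℂ) * (F i k j : ℂ) * (Ω i k : ℂ))
        * ((F i j k : ℂ) * (Ω (i+j) k : ℂ) * (F k i j : ℂ))⁻¹))
  · field_simp
  · rw [e1, e2, e3, ← e4]
    field_simp
end

section
/- Let Q be an abelian group and (F, Ω) a normalized abelian 3-cocycle such that F(i,j,k)=F(j,i,k) for all i,j,k ∈ Q. Then (a) F(i,j,k) = Ω(i+j,k)⁻¹ Ω(i,k) Ω(j,k) for all i,j,k, and (b) F(i,j,k) is multiplicative in k, i.e. F(i,j,k+l)=F(i,j,k)F(i,j,l). -/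
/-- If `(F, Ω)` is a normalized abelian 3-cocycle with `F(i,j,k) = F(j,i,k)`, then
(a) `F(i,j,k) = Ω(i+j,k)⁻¹ Ω(i,k) Ω(j,k)` and (b) `F(i,j,·)` is multiplicative. -/
theorem na3_F_symmetric (Q : Type*) [AddCommGroup Q]
    (F : Q → Q → Q → ℂˣ) (Ω : Q → Q → ℂˣ)
    (hA1 : ∀ i j k l : Q,
      F i j k * (F i j (k + l))⁻¹ * F i (j + k) l * (F (i + j) k l)⁻¹ * F j k l = 1)
    (hA2 : ∀ i j k : Q,
      (F i j k)⁻¹ * Ω i (j + k) * (F j k i)⁻¹ = Ω i j * (F j i k)⁻¹ * Ω i k)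
    (hA3 : ∀ i j k : Q,
      F i j k * Ω (i + j) k * F k i j = Ω j k * F i k j * Ω i k)
    (hA4 : ∀ i j : Q, F i j 0 = 1 ∧ F i 0 j = 1 ∧ F 0 i j = 1)
    (hA5 : ∀ i : Q, Ω i 0 = 1 ∧ Ω 0 i = 1)
    (hsym : ∀ i j k : Q, F i j k = F j i k) :
    (∀ i j k : Q, F i j k = (Ω (i + j) k)⁻¹ * Ω i k * Ω j k) ∧
    (∀ i j k l : Q, F i j (k + l) = F i j k * F i j l) := by
  -- key multiplicative relation at the ℂ level
  have ha : ∀ i j k : Q, (F i j k : ℂ) * (Ω (i + j) k : ℂ) = (Ω i k : ℂ) * (Ω j k : ℂ) := by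
    intro i j k
    have h3 := hA3 i j k
    rw [hsym k i j] at h3
    have h3' := congrArg Units.val h3
    simp only [Units.val_mul] at h3'
    exact mul_right_cancel₀ (F i k j).ne_zero (by linear_combination h3')
  constructor
  · intro i j k
    apply Units.ext
    simp only [Units.val_mul, Units.val_inv_eq_inv_val]
    field_simp
    linear_combination ha i j k
  · intro i j k l
    apply Units.ext
    simp only [Units.val_mul]
    have h1 := congrArg Units.val (hA1 i j k l)
    simp only [Units.val_mul, Units.val_inv_eq_inv_val, Units.val_one] at h1
    have hXne := (F i j (k+l)).ne_zero
    have hBne := (F (i+j) k l).ne_zero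
    have h1' : (F i j (k+l) : ℂ) * (F (i+j) k l : ℂ)
        = (F i j k : ℂ) * (F i (j+k) l : ℂ) * (F j k l : ℂ) := by
      field_simp at h1
      linear_combination -h1
    have a1 := ha i (j+k) l
    rw [← add_assoc] at a1
    have a2 := ha (i+j) k l
    have a3 := ha j k l
    have a4 := ha i j l
    have hW := (Ω (i+j+k) l).ne_zero
    have hJK := (Ω (j+k) l).ne_zero
    have hIJ := (Ω (i+j) l).ne_zero
    have hA : (F i (j+k) l : ℂ) = (Ω i l : ℂ) * (Ω (j+k) l : ℂ) / (Ω (i+j+k) l : ℂ) := by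
      rw [eq_div_iff hW]; exact a1
    have hB : (F (i+j) k l : ℂ) = (Ω (i+j) l : ℂ) * (Ω k l : ℂ) / (Ω (i+j+k) l : ℂ) := by
      rw [eq_div_iff hW]; exact a2
    have hC : (F j k l : ℂ) = (Ω j l : ℂ) * (Ω k l : ℂ) / (Ω (j+k) l : ℂ) := by
      rw [eq_div_iff hJK]; exact a3
    have hD : (F i j l : ℂ) = (Ω i l : ℂ) * (Ω j l : ℂ) / (Ω (i+j) l : ℂ) := by
      rw [eq_div_iff hIJ]; exact a4
    have hX : (F i j (k+l) : ℂ) = (F i j k : ℂ) * (F i (j+k) l : ℂ) * (F j k l : ℂ)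
        / (F (i+j) k l : ℂ) := by
      rw [eq_div_iff hBne]; exact h1'
    rw [hX, hA, hB, hC, hD]
    have hKl := (Ω k l).ne_zero
    field_simp
end

section
/- Let Q be an abelian group and η: Q×Q→ℂ× a function such that (a) μ(i,j,k) := η(i+j,k)⁻¹η(i,k)η(j,k) is multiplicative in k (i.e. μ(i,j,k+l)=μ(i,j,k)μ(i,j,l)), (b) there exists a bilinear map Δ: Q×Q→ℂ/ℤ with η(i,j)η(j,i)=e^{-2πiΔ(i,j)}, and (c) η(i,0)=η(0,i)=1 for all i ∈ Q. Then (μ, η) is a normalized abelian 3-cocycle satisfying μ(i,j,k)=μ(j,i,k) for all i,j,k ∈ Q. -/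
open Complex

/-!
Every identity except the first hexagon is formal once `μ` is written as the coboundary of `η`
in its first two arguments: the pentagon reduces, via multiplicativity of `μ` in its last
argument, to the 2-cocycle identity of a coboundary. The first hexagon amounts to
`η(i,j)η(j,i)` being multiplicative in `j`, which holds because it equals `e^{-2πiΔ(i,j)}` and
`Δ` is additive in `j` up to an integer.
-/

section Coboundary

variable {Q G : Type*} [AddCommGroup Q] [CommGroup G] (η : Q → Q → G)

def coboundaryMu (i j k : Q) : G := (η (i + j) k)⁻¹ * η i k * η j k

theorem coboundaryMu_comm (i j k : Q) : coboundaryMu η i j k = coboundaryMu η j i k := by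
  rw [coboundaryMu, coboundaryMu, add_comm j i, mul_right_comm]

theorem coboundaryMu_pentagon
    (hmul : ∀ i j k l : Q,
      coboundaryMu η i j (k + l) = coboundaryMu η i j k * coboundaryMu η i j l)
    (i j k l : Q) :
    coboundaryMu η i j k * (coboundaryMu η i j (k + l))⁻¹ * coboundaryMu η i (j + k) l *
      (coboundaryMu η (i + j) k l)⁻¹ * coboundaryMu η j k l = 1 := by
  rw [hmul]
  apply Additive.ofMul.injective
  simp only [coboundaryMu, ofMul_mul, ofMul_inv, ofMul_one, add_assoc]
  abel

theorem coboundaryMu_hexagon_left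
    (hsymm : ∀ i j k : Q, η i (j + k) * η (j + k) i = η i j * η j i * (η i k * η k i))
    (i j k : Q) :
    (coboundaryMu η i j k)⁻¹ * η i (j + k) * (coboundaryMu η j k i)⁻¹ =
      η i j * (coboundaryMu η j i k)⁻¹ * η i k := by
  rw [eq_mul_inv_of_mul_eq (hsymm i j k)]
  apply Additive.ofMul.injective
  simp only [coboundaryMu, ofMul_mul, ofMul_inv, add_comm j i]
  abel

theorem coboundaryMu_hexagon_right (i j k : Q) :
    coboundaryMu η i j k * η (i + j) k * coboundaryMu η k i j =
      η j k * coboundaryMu η i k j * η i k := by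
  apply Additive.ofMul.injective
  simp only [coboundaryMu, ofMul_mul, ofMul_inv, add_comm k i]
  abel

theorem coboundaryMu_normalized (hη : ∀ i : Q, η i 0 = 1 ∧ η 0 i = 1) (i j : Q) :
    coboundaryMu η i j 0 = 1 ∧ coboundaryMu η i 0 j = 1 ∧ coboundaryMu η 0 i j = 1 := by
  simp [coboundaryMu, hη]

end Coboundary

theorem exp_neg_two_pi_I_mul_of_eq_add_add_int {a b c : ℂ} (h : ∃ m : ℤ, a = b + c + m) :
    exp (-(2 * Real.pi * I) * a) =
      exp (-(2 * Real.pi * I) * b) * exp (-(2 * Real.pi * I) * c) := by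
  obtain ⟨m, rfl⟩ := h
  rw [← exp_add, ← mul_one (exp (_ + _)), ← exp_int_mul_two_pi_mul_I (-m), ← exp_add]
  congr 1
  push_cast
  ring

theorem quasi_eta_gives_na3_general (Q : Type*) [AddCommGroup Q]
    (η : Q → Q → ℂˣ)
    (μ : Q → Q → Q → ℂˣ)
    (hμ : ∀ i j k : Q, μ i j k = (η (i + j) k)⁻¹ * η i k * η j k)
    (ha : ∀ i j k l : Q, μ i j (k + l) = μ i j k * μ i j l)
    (Δ : Q → Q → ℂ)
    (hΔbil : ∀ i j k : Q, (∃ m : ℤ, Δ (i + j) k = Δ i k + Δ j k + m) ∧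
      (∃ m : ℤ, Δ i (j + k) = Δ i j + Δ i k + m))
    (hb : ∀ i j : Q, ((η i j : ℂ) * (η j i : ℂ))
      = Complex.exp (-(2 * Real.pi * Complex.I) * Δ i j))
    (hc : ∀ i : Q, η i 0 = 1 ∧ η 0 i = 1) :
    (∀ i j k l : Q,
      μ i j k * (μ i j (k + l))⁻¹ * μ i (j + k) l * (μ (i + j) k l)⁻¹ * μ j k l = 1) ∧
    (∀ i j k : Q,
      (μ i j k)⁻¹ * η i (j + k) * (μ j k i)⁻¹ = η i j * (μ j i k)⁻¹ * η i k) ∧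
    (∀ i j k : Q,
      μ i j k * η (i + j) k * μ k i j = η j k * μ i k j * η i k) ∧
    (∀ i j : Q, μ i j 0 = 1 ∧ μ i 0 j = 1 ∧ μ 0 i j = 1) ∧
    (∀ i : Q, η i 0 = 1 ∧ η 0 i = 1) ∧
    (∀ i j k : Q, μ i j k = μ j i k) := by
  obtain rfl : μ = coboundaryMu η := funext fun i => funext fun j => funext (hμ i j)
  have hsymm (i j k : Q) : η i (j + k) * η (j + k) i = η i j * η j i * (η i k * η k i) := by
    ext
    push_cast
    rw [hb, hb, hb]
    exact exp_neg_two_pi_I_mul_of_eq_add_add_int (hΔbil i j k).2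
  exact ⟨coboundaryMu_pentagon η ha, coboundaryMu_hexagon_left η hsymm,
    coboundaryMu_hexagon_right η, coboundaryMu_normalized η hc, hc, coboundaryMu_comm η⟩

/-- If `η : Q × Q → ℂˣ` satisfies: (a) `μ(i,j,k) := η(i+j,k)⁻¹ η(i,k) η(j,k)` is
multiplicative in `k`, (b) `η(i,j)η(j,i) = e^{-2πiΔ(i,j)}` for a bilinear map
`Δ : Q × Q → ℂ/ℤ` (realized by `Δ : Q × Q → ℂ` which is symmetric and biadditive
modulo `ℤ`), and (c) `η(i,0) = η(0,i) = 1`, then `(μ, η)` is a normalized abelian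
3-cocycle with `μ(i,j,k) = μ(j,i,k)`. -/
theorem quasi_eta_gives_na3 (Q : Type*) [AddCommGroup Q]
    (η : Q → Q → ℂˣ)
    (μ : Q → Q → Q → ℂˣ)
    (hμ : ∀ i j k : Q, μ i j k = (η (i + j) k)⁻¹ * η i k * η j k)
    (ha : ∀ i j k l : Q, μ i j (k + l) = μ i j k * μ i j l)
    (Δ : Q → Q → ℂ)
    (hΔsym : ∀ i j : Q, ∃ m : ℤ, Δ i j = Δ j i + m)
    (hΔbil : ∀ i j k : Q, (∃ m : ℤ, Δ (i + j) k = Δ i k + Δ j k + m) ∧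
      (∃ m : ℤ, Δ i (j + k) = Δ i j + Δ i k + m))
    (hb : ∀ i j : Q, ((η i j : ℂ) * (η j i : ℂ))
      = Complex.exp (-(2 * Real.pi * Complex.I) * Δ i j))
    (hc : ∀ i : Q, η i 0 = 1 ∧ η 0 i = 1) :
    (∀ i j k l : Q,
      μ i j k * (μ i j (k + l))⁻¹ * μ i (j + k) l * (μ (i + j) k l)⁻¹ * μ j k l = 1) ∧
    (∀ i j k : Q,
      (μ i j k)⁻¹ * η i (j + k) * (μ j k i)⁻¹ = η i j * (μ j i k)⁻¹ * η i k) ∧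
    (∀ i j k : Q,
      μ i j k * η (i + j) k * μ k i j = η j k * μ i k j * η i k) ∧
    (∀ i j : Q, μ i j 0 = 1 ∧ μ i 0 j = 1 ∧ μ 0 i j = 1) ∧
    (∀ i : Q, η i 0 = 1 ∧ η 0 i = 1) ∧
    (∀ i j k : Q, μ i j k = μ j i k) :=
  quasi_eta_gives_na3_general Q η μ hμ ha Δ hΔbil hb hc
end

section
/- In the root system Φ(D₄) with highest root θ = ε₁+ε₂ and S_{±1/2} = {α ∈ Φ(D₄) : (α|θ) = ±1}, for every pair α, β ∈ S_{-1/2} with (α|β) = 1, the set X = { γ ∈ S_{1/2} : (α|γ) = 0 and (γ|β) = -1 } has exactly 2 elements. -/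
/-- Standard basis vector of `ℝ⁴`. -/
noncomputable def eD4 (i : Fin 4) : Fin 4 → ℝ := Pi.single i 1

/-- Standard inner product on `ℝ⁴`. -/
noncomputable def ipD4 (x y : Fin 4 → ℝ) : ℝ := ∑ i, x i * y i

/-- The root system of type `D₄`: the vectors `±εᵢ ± εⱼ`, `i < j`. -/
def PhiD4 : Set (Fin 4 → ℝ) :=
  { v | ∃ (i j : Fin 4) (μ ν : ℝ), i < j ∧ (μ = 1 ∨ μ = -1) ∧ (ν = 1 ∨ ν = -1) ∧
        v = μ • eD4 i + ν • eD4 j }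

/-- The highest root `θ = ε₁ + ε₂` of `D₄`. -/
noncomputable def thetaD4 : Fin 4 → ℝ := eD4 0 + eD4 1

/-!
The roots of `D₄` have integer coordinates, so `PhiD4` is the image of a finset of 24 integer
vectors and every inner product in the statement is the cast of an integer dot product; the count
thus becomes a finite computation over `ℤ`. By hand: write `α = -εₐ + s εₖ` with `a ∈ {1,2}`,
`k ∈ {3,4}`, and let `a'`, `k'` be the other indices. Then `(α|β) = 1` forces either
`β = -εₐ + t εₖ'`, and `X = {εₐ + s εₖ, εₐ' - t εₖ'}`, or `β = -εₐ' + s εₖ`, and `X = {εₐ' ± εₖ'}`.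
-/

open Finset Matrix

namespace D4

def intRoots : Finset (Fin 4 → ℤ) :=
  ((univ.filter fun p : Fin 4 × Fin 4 => p.1 < p.2) ×ˢ (({1, -1} : Finset ℤ) ×ˢ {1, -1})).image
    fun p => p.2.1 • Pi.single p.1.1 1 + p.2.2 • Pi.single p.1.2 1

def intTheta : Fin 4 → ℤ := Pi.single 0 1 + Pi.single 1 1

lemma cast_comp_single (i : Fin 4) : (Int.cast ∘ Pi.single i 1 : Fin 4 → ℝ) = eD4 i := by
  ext k
  by_cases h : k = i <;> simp [eD4, h]

lemma cast_comp_smul_single_add (i j : Fin 4) (μ ν : ℤ) :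
    (Int.cast ∘ (μ • Pi.single i 1 + ν • Pi.single j 1) : Fin 4 → ℝ) =
      (μ : ℝ) • eD4 i + (ν : ℝ) • eD4 j := by
  simp [← cast_comp_single, funext_iff]

lemma thetaD4_eq_cast : thetaD4 = Int.cast ∘ intTheta := by
  simpa [thetaD4, intTheta] using (cast_comp_smul_single_add 0 1 1 1).symm

lemma ipD4_cast (x y : Fin 4 → ℤ) : ipD4 (Int.cast ∘ x) (Int.cast ∘ y) = ((x ⬝ᵥ y : ℤ) : ℝ) :=
  ((Int.castRingHom ℝ).map_dotProduct x y).symm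

lemma eq_one_or_neg_one_iff_exists_int {μ : ℝ} :
    (μ = 1 ∨ μ = -1) ↔ ∃ m ∈ ({1, -1} : Finset ℤ), (m : ℝ) = μ := by
  constructor
  · rintro (rfl | rfl) <;> simp
  · rintro ⟨m, hm, rfl⟩
    simp only [mem_insert, mem_singleton] at hm
    rcases hm with rfl | rfl <;> simp

lemma mem_PhiD4_iff {v : Fin 4 → ℝ} : v ∈ PhiD4 ↔ ∃ w ∈ intRoots, Int.cast ∘ w = v := by
  constructor
  · rintro ⟨i, j, μ, ν, hij, hμ, hν, rfl⟩
    obtain ⟨m, hm, rfl⟩ := eq_one_or_neg_one_iff_exists_int.1 hμ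
    obtain ⟨n, hn, rfl⟩ := eq_one_or_neg_one_iff_exists_int.1 hν
    exact ⟨_, mem_image.2 ⟨((i, j), m, n), by simp_all, rfl⟩, cast_comp_smul_single_add i j m n⟩
  · rintro ⟨_, hw, rfl⟩
    obtain ⟨⟨⟨i, j⟩, m, n⟩, hp, rfl⟩ := mem_image.1 hw
    simp only [mem_product, mem_filter, mem_univ, true_and] at hp
    exact ⟨i, j, m, n, hp.1, eq_one_or_neg_one_iff_exists_int.2 ⟨m, hp.2.1, rfl⟩,
      eq_one_or_neg_one_iff_exists_int.2 ⟨n, hp.2.2, rfl⟩, cast_comp_smul_single_add i j m n⟩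

lemma setOf_mem_PhiD4_and (P : (Fin 4 → ℝ) → Prop) :
    {γ | γ ∈ PhiD4 ∧ P γ} = (Int.cast ∘ ·) '' {c | c ∈ intRoots ∧ P (Int.cast ∘ c)} := by
  ext γ
  simp only [Set.mem_ofPred_eq, Set.mem_image, mem_PhiD4_iff]
  constructor
  · rintro ⟨⟨c, hc, rfl⟩, hP⟩
    exact ⟨c, ⟨hc, hP⟩, rfl⟩
  · rintro ⟨c, ⟨hc, hP⟩, rfl⟩
    exact ⟨⟨c, hc, rfl⟩, hP⟩

theorem card_filter_intRoots :
    ∀ a ∈ intRoots, ∀ b ∈ intRoots, a ⬝ᵥ intTheta = -1 → b ⬝ᵥ intTheta = -1 → a ⬝ᵥ b = 1 →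
      (intRoots.filter fun c => c ⬝ᵥ intTheta = 1 ∧ a ⬝ᵥ c = 0 ∧ c ⬝ᵥ b = -1).card = 2 := by
  decide

end D4

/-- In `D₄`, for `α, β ∈ S_{-1/2}` with `(α|β) = 1`, the set
`X = {γ ∈ S_{1/2} : (α|γ) = 0, (γ|β) = -1}` has exactly `2 = h∨/3` elements. -/
theorem D4_case1_count (α β : Fin 4 → ℝ)
    (hα : α ∈ PhiD4) (hαθ : ipD4 α thetaD4 = -1)
    (hβ : β ∈ PhiD4) (hβθ : ipD4 β thetaD4 = -1)
    (hαβ : ipD4 α β = 1) :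
    {γ | γ ∈ PhiD4 ∧ ipD4 γ thetaD4 = 1 ∧ ipD4 α γ = 0 ∧ ipD4 γ β = -1}.ncard = 2 := by
  obtain ⟨a, ha, rfl⟩ := D4.mem_PhiD4_iff.1 hα
  obtain ⟨b, hb, rfl⟩ := D4.mem_PhiD4_iff.1 hβ
  rw [D4.setOf_mem_PhiD4_and, Set.ncard_image_of_injective _ Int.cast_injective.comp_left]
  simp only [D4.thetaD4_eq_cast, D4.ipD4_cast] at hαθ hβθ hαβ ⊢
  norm_cast at hαθ hβθ hαβ ⊢
  rw [← coe_filter, Set.ncard_coe_finset]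
  exact D4.card_filter_intRoots a ha b hb hαθ hβθ hαβ
end

section
/- Let Φ(E₈) ⊂ ℝ⁸ be the E₈ root system consisting of με_i+νε_j (i<j, μ,ν ∈ {±1}) and (1/2)Σᵢ(-1)^{νᵢ}εᵢ with Σνᵢ even, and θ = ε₇+ε₈ the highest root. For every pair α, β ∈ S_{-1/2} = {γ ∈ Φ(E₈) : (γ|θ) = -1} with (α|β) = 1, the set X = { γ ∈ S_{1/2} : (α|γ) = 0 and (γ|β) = -1 } has exactly 10 elements, where S_{1/2} = {γ ∈ Φ(E₈) : (γ|θ) = 1}. -/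
/-- Standard basis vector of `ℝ⁸`. -/
noncomputable def eE8 (i : Fin 8) : Fin 8 → ℝ := Pi.single i 1

/-- Standard inner product on `ℝ⁸`. -/
noncomputable def ipE8 (x y : Fin 8 → ℝ) : ℝ := ∑ i, x i * y i

/-- The root system of type `E₈`: the 240 vectors `±εᵢ ± εⱼ` (`i < j`) together with
`(1/2)∑ σᵢ εᵢ` with `σᵢ ∈ {±1}` and an even number of `σᵢ` equal to `-1`. -/
def PhiE8 : Set (Fin 8 → ℝ) :=
  { v | (∃ (i j : Fin 8) (μ ν : ℝ), i < j ∧ (μ = 1 ∨ μ = -1) ∧ (ν = 1 ∨ ν = -1) ∧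
          v = μ • eE8 i + ν • eE8 j) ∨
        (∃ σ : Fin 8 → ℝ, (∀ i, σ i = 1 ∨ σ i = -1) ∧
          Even {i | σ i = -1}.ncard ∧ v = (1 / 2 : ℝ) • σ) }

/-- The highest root `θ = ε₇ + ε₈` of `E₈`. -/
noncomputable def thetaE8 : Fin 8 → ℝ := eE8 6 + eE8 7

/-! ### Auxiliary integer model -/

def ipz (a b : Fin 8 → ℤ) : ℤ :=
  a 0 * b 0 + a 1 * b 1 + a 2 * b 2 + a 3 * b 3 + a 4 * b 4 + a 5 * b 5 + a 6 * b 6 + a 7 * b 7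

def sgE8 (b : Bool) : ℤ := if b then 2 else -2

def PhiZ : Finset (Fin 8 → ℤ) :=
  ((Finset.univ : Finset (Fin 8 × Fin 8 × Bool × Bool)).filter (fun p => p.1 < p.2.1)).image
    (fun p k => (if k = p.1 then sgE8 p.2.2.1 else 0) + (if k = p.2.1 then sgE8 p.2.2.2 else 0)) ∪
  ((Finset.univ : Finset (Fin 8 → Bool)).filter
      (fun s => Even ((Finset.univ.filter (fun i => s i = false)).card))).image
    (fun s i => if s i then (1 : ℤ) else -1)

noncomputable def toR (w : Fin 8 → ℤ) : Fin 8 → ℝ := fun i => (w i : ℝ) / 2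

set_option maxRecDepth 100000
set_option maxHeartbeats 16000000

def ThZ : Fin 8 → ℤ := fun k => if k = 6 ∨ k = 7 then 2 else 0
def L240E8 : List (Fin 8 → ℤ) := [![2,2,0,0,0,0,0,0], ![2,-2,0,0,0,0,0,0], ![-2,2,0,0,0,0,0,0], ![-2,-2,0,0,0,0,0,0], ![2,0,2,0,0,0,0,0], ![2,0,-2,0,0,0,0,0], ![-2,0,2,0,0,0,0,0], ![-2,0,-2,0,0,0,0,0], ![2,0,0,2,0,0,0,0], ![2,0,0,-2,0,0,0,0], ![-2,0,0,2,0,0,0,0], ![-2,0,0,-2,0,0,0,0], ![2,0,0,0,2,0,0,0], ![2,0,0,0,-2,0,0,0], ![-2,0,0,0,2,0,0,0], ![-2,0,0,0,-2,0,0,0], ![2,0,0,0,0,2,0,0], ![2,0,0,0,0,-2,0,0], ![-2,0,0,0,0,2,0,0], ![-2,0,0,0,0,-2,0,0], ![2,0,0,0,0,0,2,0], ![2,0,0,0,0,0,-2,0], ![-2,0,0,0,0,0,2,0], ![-2,0,0,0,0,0,-2,0], ![2,0,0,0,0,0,0,2], ![2,0,0,0,0,0,0,-2], ![-2,0,0,0,0,0,0,2],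 ![-2,0,0,0,0,0,0,-2], ![0,2,2,0,0,0,0,0], ![0,2,-2,0,0,0,0,0], ![0,-2,2,0,0,0,0,0], ![0,-2,-2,0,0,0,0,0], ![0,2,0,2,0,0,0,0], ![0,2,0,-2,0,0,0,0], ![0,-2,0,2,0,0,0,0], ![0,-2,0,-2,0,0,0,0], ![0,2,0,0,2,0,0,0], ![0,2,0,0,-2,0,0,0], ![0,-2,0,0,2,0,0,0], ![0,-2,0,0,-2,0,0,0], ![0,2,0,0,0,2,0,0], ![0,2,0,0,0,-2,0,0], ![0,-2,0,0,0,2,0,0], ![0,-2,0,0,0,-2,0,0], ![0,2,0,0,0,0,2,0], ![0,2,0,0,0,0,-2,0], ![0,-2,0,0,0,0,2,0], ![0,-2,0,0,0,0,-2,0], ![0,2,0,0,0,0,0,2], ![0,2,0,0,0,0,0,-2], ![0,-2,0,0,0,0,0,2], ![0,-2,0,0,0,0,0,-2], ![0,0,2,2,0,0,0,0], ![0,0,2,-2,0,0,0,0], ![0,0,-2,2,0,0,0,0], ![0,0,-2,-2,0,0,0,0], ![0,0,2,0,2,0,0,0], ![0,0,2,0,-2,0,0,0], ![0,0,-2,0,2,0,0,0],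 ![0,0,-2,0,-2,0,0,0], ![0,0,2,0,0,2,0,0], ![0,0,2,0,0,-2,0,0], ![0,0,-2,0,0,2,0,0], ![0,0,-2,0,0,-2,0,0], ![0,0,2,0,0,0,2,0], ![0,0,2,0,0,0,-2,0], ![0,0,-2,0,0,0,2,0], ![0,0,-2,0,0,0,-2,0], ![0,0,2,0,0,0,0,2], ![0,0,2,0,0,0,0,-2], ![0,0,-2,0,0,0,0,2], ![0,0,-2,0,0,0,0,-2], ![0,0,0,2,2,0,0,0], ![0,0,0,2,-2,0,0,0], ![0,0,0,-2,2,0,0,0], ![0,0,0,-2,-2,0,0,0], ![0,0,0,2,0,2,0,0], ![0,0,0,2,0,-2,0,0], ![0,0,0,-2,0,2,0,0], ![0,0,0,-2,0,-2,0,0], ![0,0,0,2,0,0,2,0], ![0,0,0,2,0,0,-2,0], ![0,0,0,-2,0,0,2,0], ![0,0,0,-2,0,0,-2,0], ![0,0,0,2,0,0,0,2], ![0,0,0,2,0,0,0,-2], ![0,0,0,-2,0,0,0,2], ![0,0,0,-2,0,0,0,-2], ![0,0,0,0,2,2,0,0], ![0,0,0,0,2,-2,0,0], ![0,0,0,0,-2,2,0,0],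 ![0,0,0,0,-2,-2,0,0], ![0,0,0,0,2,0,2,0], ![0,0,0,0,2,0,-2,0], ![0,0,0,0,-2,0,2,0], ![0,0,0,0,-2,0,-2,0], ![0,0,0,0,2,0,0,2], ![0,0,0,0,2,0,0,-2], ![0,0,0,0,-2,0,0,2], ![0,0,0,0,-2,0,0,-2], ![0,0,0,0,0,2,2,0], ![0,0,0,0,0,2,-2,0], ![0,0,0,0,0,-2,2,0], ![0,0,0,0,0,-2,-2,0], ![0,0,0,0,0,2,0,2], ![0,0,0,0,0,2,0,-2], ![0,0,0,0,0,-2,0,2], ![0,0,0,0,0,-2,0,-2], ![0,0,0,0,0,0,2,2], ![0,0,0,0,0,0,2,-2], ![0,0,0,0,0,0,-2,2], ![0,0,0,0,0,0,-2,-2], ![1,1,1,1,1,1,1,1], ![1,1,1,1,1,1,-1,-1], ![1,1,1,1,1,-1,1,-1], ![1,1,1,1,1,-1,-1,1], ![1,1,1,1,-1,1,1,-1], ![1,1,1,1,-1,1,-1,1], ![1,1,1,1,-1,-1,1,1], ![1,1,1,1,-1,-1,-1,-1], ![1,1,1,-1,1,1,1,-1], ![1,1,1,-1,1,1,-1,1],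 ![1,1,1,-1,1,-1,1,1], ![1,1,1,-1,1,-1,-1,-1], ![1,1,1,-1,-1,1,1,1], ![1,1,1,-1,-1,1,-1,-1], ![1,1,1,-1,-1,-1,1,-1], ![1,1,1,-1,-1,-1,-1,1], ![1,1,-1,1,1,1,1,-1], ![1,1,-1,1,1,1,-1,1], ![1,1,-1,1,1,-1,1,1], ![1,1,-1,1,1,-1,-1,-1], ![1,1,-1,1,-1,1,1,1], ![1,1,-1,1,-1,1,-1,-1], ![1,1,-1,1,-1,-1,1,-1], ![1,1,-1,1,-1,-1,-1,1], ![1,1,-1,-1,1,1,1,1], ![1,1,-1,-1,1,1,-1,-1], ![1,1,-1,-1,1,-1,1,-1], ![1,1,-1,-1,1,-1,-1,1], ![1,1,-1,-1,-1,1,1,-1], ![1,1,-1,-1,-1,1,-1,1], ![1,1,-1,-1,-1,-1,1,1], ![1,1,-1,-1,-1,-1,-1,-1], ![1,-1,1,1,1,1,1,-1], ![1,-1,1,1,1,1,-1,1], ![1,-1,1,1,1,-1,1,1], ![1,-1,1,1,1,-1,-1,-1], ![1,-1,1,1,-1,1,1,1], ![1,-1,1,1,-1,1,-1,-1], ![1,-1,1,1,-1,-1,1,-1],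 ![1,-1,1,1,-1,-1,-1,1], ![1,-1,1,-1,1,1,1,1], ![1,-1,1,-1,1,1,-1,-1], ![1,-1,1,-1,1,-1,1,-1], ![1,-1,1,-1,1,-1,-1,1], ![1,-1,1,-1,-1,1,1,-1], ![1,-1,1,-1,-1,1,-1,1], ![1,-1,1,-1,-1,-1,1,1], ![1,-1,1,-1,-1,-1,-1,-1], ![1,-1,-1,1,1,1,1,1], ![1,-1,-1,1,1,1,-1,-1], ![1,-1,-1,1,1,-1,1,-1], ![1,-1,-1,1,1,-1,-1,1], ![1,-1,-1,1,-1,1,1,-1], ![1,-1,-1,1,-1,1,-1,1], ![1,-1,-1,1,-1,-1,1,1], ![1,-1,-1,1,-1,-1,-1,-1], ![1,-1,-1,-1,1,1,1,-1], ![1,-1,-1,-1,1,1,-1,1], ![1,-1,-1,-1,1,-1,1,1], ![1,-1,-1,-1,1,-1,-1,-1], ![1,-1,-1,-1,-1,1,1,1], ![1,-1,-1,-1,-1,1,-1,-1], ![1,-1,-1,-1,-1,-1,1,-1], ![1,-1,-1,-1,-1,-1,-1,1], ![-1,1,1,1,1,1,1,-1], ![-1,1,1,1,1,1,-1,1], ![-1,1,1,1,1,-1,1,1],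 ![-1,1,1,1,1,-1,-1,-1], ![-1,1,1,1,-1,1,1,1], ![-1,1,1,1,-1,1,-1,-1], ![-1,1,1,1,-1,-1,1,-1], ![-1,1,1,1,-1,-1,-1,1], ![-1,1,1,-1,1,1,1,1], ![-1,1,1,-1,1,1,-1,-1], ![-1,1,1,-1,1,-1,1,-1], ![-1,1,1,-1,1,-1,-1,1], ![-1,1,1,-1,-1,1,1,-1], ![-1,1,1,-1,-1,1,-1,1], ![-1,1,1,-1,-1,-1,1,1], ![-1,1,1,-1,-1,-1,-1,-1], ![-1,1,-1,1,1,1,1,1], ![-1,1,-1,1,1,1,-1,-1], ![-1,1,-1,1,1,-1,1,-1], ![-1,1,-1,1,1,-1,-1,1], ![-1,1,-1,1,-1,1,1,-1], ![-1,1,-1,1,-1,1,-1,1], ![-1,1,-1,1,-1,-1,1,1], ![-1,1,-1,1,-1,-1,-1,-1], ![-1,1,-1,-1,1,1,1,-1], ![-1,1,-1,-1,1,1,-1,1], ![-1,1,-1,-1,1,-1,1,1], ![-1,1,-1,-1,1,-1,-1,-1], ![-1,1,-1,-1,-1,1,1,1], ![-1,1,-1,-1,-1,1,-1,-1], ![-1,1,-1,-1,-1,-1,1,-1],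 ![-1,1,-1,-1,-1,-1,-1,1], ![-1,-1,1,1,1,1,1,1], ![-1,-1,1,1,1,1,-1,-1], ![-1,-1,1,1,1,-1,1,-1], ![-1,-1,1,1,1,-1,-1,1], ![-1,-1,1,1,-1,1,1,-1], ![-1,-1,1,1,-1,1,-1,1], ![-1,-1,1,1,-1,-1,1,1], ![-1,-1,1,1,-1,-1,-1,-1], ![-1,-1,1,-1,1,1,1,-1], ![-1,-1,1,-1,1,1,-1,1], ![-1,-1,1,-1,1,-1,1,1], ![-1,-1,1,-1,1,-1,-1,-1], ![-1,-1,1,-1,-1,1,1,1], ![-1,-1,1,-1,-1,1,-1,-1], ![-1,-1,1,-1,-1,-1,1,-1], ![-1,-1,1,-1,-1,-1,-1,1], ![-1,-1,-1,1,1,1,1,-1], ![-1,-1,-1,1,1,1,-1,1], ![-1,-1,-1,1,1,-1,1,1], ![-1,-1,-1,1,1,-1,-1,-1], ![-1,-1,-1,1,-1,1,1,1], ![-1,-1,-1,1,-1,1,-1,-1], ![-1,-1,-1,1,-1,-1,1,-1], ![-1,-1,-1,1,-1,-1,-1,1], ![-1,-1,-1,-1,1,1,1,1], ![-1,-1,-1,-1,1,1,-1,-1],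 ![-1,-1,-1,-1,1,-1,1,-1], ![-1,-1,-1,-1,1,-1,-1,1], ![-1,-1,-1,-1,-1,1,1,-1], ![-1,-1,-1,-1,-1,1,-1,1], ![-1,-1,-1,-1,-1,-1,1,1], ![-1,-1,-1,-1,-1,-1,-1,-1]]
def SlistE8 : List (Fin 8 → ℤ) := [![2,0,0,0,0,0,-2,0], ![-2,0,0,0,0,0,-2,0], ![2,0,0,0,0,0,0,-2], ![-2,0,0,0,0,0,0,-2], ![0,2,0,0,0,0,-2,0], ![0,-2,0,0,0,0,-2,0], ![0,2,0,0,0,0,0,-2], ![0,-2,0,0,0,0,0,-2], ![0,0,2,0,0,0,-2,0], ![0,0,-2,0,0,0,-2,0], ![0,0,2,0,0,0,0,-2], ![0,0,-2,0,0,0,0,-2], ![0,0,0,2,0,0,-2,0], ![0,0,0,-2,0,0,-2,0], ![0,0,0,2,0,0,0,-2], ![0,0,0,-2,0,0,0,-2], ![0,0,0,0,2,0,-2,0], ![0,0,0,0,-2,0,-2,0], ![0,0,0,0,2,0,0,-2], ![0,0,0,0,-2,0,0,-2], ![0,0,0,0,0,2,-2,0], ![0,0,0,0,0,-2,-2,0],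 ![0,0,0,0,0,2,0,-2], ![0,0,0,0,0,-2,0,-2], ![1,1,1,1,1,1,-1,-1], ![1,1,1,1,-1,-1,-1,-1], ![1,1,1,-1,1,-1,-1,-1], ![1,1,1,-1,-1,1,-1,-1], ![1,1,-1,1,1,-1,-1,-1], ![1,1,-1,1,-1,1,-1,-1], ![1,1,-1,-1,1,1,-1,-1], ![1,1,-1,-1,-1,-1,-1,-1], ![1,-1,1,1,1,-1,-1,-1], ![1,-1,1,1,-1,1,-1,-1], ![1,-1,1,-1,1,1,-1,-1], ![1,-1,1,-1,-1,-1,-1,-1], ![1,-1,-1,1,1,1,-1,-1], ![1,-1,-1,1,-1,-1,-1,-1], ![1,-1,-1,-1,1,-1,-1,-1], ![1,-1,-1,-1,-1,1,-1,-1], ![-1,1,1,1,1,-1,-1,-1], ![-1,1,1,1,-1,1,-1,-1], ![-1,1,1,-1,1,1,-1,-1], ![-1,1,1,-1,-1,-1,-1,-1], ![-1,1,-1,1,1,1,-1,-1], ![-1,1,-1,1,-1,-1,-1,-1], ![-1,1,-1,-1,1,-1,-1,-1], ![-1,1,-1,-1,-1,1,-1,-1], ![-1,-1,1,1,1,1,-1,-1],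 ![-1,-1,1,1,-1,-1,-1,-1], ![-1,-1,1,-1,1,-1,-1,-1], ![-1,-1,1,-1,-1,1,-1,-1], ![-1,-1,-1,1,1,-1,-1,-1], ![-1,-1,-1,1,-1,1,-1,-1], ![-1,-1,-1,-1,1,1,-1,-1], ![-1,-1,-1,-1,-1,-1,-1,-1]]
def TlistE8 : List (Fin 8 → ℤ) := [![2,0,0,0,0,0,2,0], ![-2,0,0,0,0,0,2,0], ![2,0,0,0,0,0,0,2], ![-2,0,0,0,0,0,0,2], ![0,2,0,0,0,0,2,0], ![0,-2,0,0,0,0,2,0], ![0,2,0,0,0,0,0,2], ![0,-2,0,0,0,0,0,2], ![0,0,2,0,0,0,2,0], ![0,0,-2,0,0,0,2,0], ![0,0,2,0,0,0,0,2], ![0,0,-2,0,0,0,0,2], ![0,0,0,2,0,0,2,0], ![0,0,0,-2,0,0,2,0], ![0,0,0,2,0,0,0,2], ![0,0,0,-2,0,0,0,2], ![0,0,0,0,2,0,2,0], ![0,0,0,0,-2,0,2,0], ![0,0,0,0,2,0,0,2], ![0,0,0,0,-2,0,0,2], ![0,0,0,0,0,2,2,0], ![0,0,0,0,0,-2,2,0],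 ![0,0,0,0,0,2,0,2], ![0,0,0,0,0,-2,0,2], ![1,1,1,1,1,1,1,1], ![1,1,1,1,-1,-1,1,1], ![1,1,1,-1,1,-1,1,1], ![1,1,1,-1,-1,1,1,1], ![1,1,-1,1,1,-1,1,1], ![1,1,-1,1,-1,1,1,1], ![1,1,-1,-1,1,1,1,1], ![1,1,-1,-1,-1,-1,1,1], ![1,-1,1,1,1,-1,1,1], ![1,-1,1,1,-1,1,1,1], ![1,-1,1,-1,1,1,1,1], ![1,-1,1,-1,-1,-1,1,1], ![1,-1,-1,1,1,1,1,1], ![1,-1,-1,1,-1,-1,1,1], ![1,-1,-1,-1,1,-1,1,1], ![1,-1,-1,-1,-1,1,1,1], ![-1,1,1,1,1,-1,1,1], ![-1,1,1,1,-1,1,1,1], ![-1,1,1,-1,1,1,1,1], ![-1,1,1,-1,-1,-1,1,1], ![-1,1,-1,1,1,1,1,1], ![-1,1,-1,1,-1,-1,1,1], ![-1,1,-1,-1,1,-1,1,1], ![-1,1,-1,-1,-1,1,1,1], ![-1,-1,1,1,1,1,1,1], ![-1,-1,1,1,-1,-1,1,1], ![-1,-1,1,-1,1,-1,1,1], ![-1,-1,1,-1,-1,1,1,1],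 ![-1,-1,-1,1,1,-1,1,1], ![-1,-1,-1,1,-1,1,1,1], ![-1,-1,-1,-1,1,1,1,1], ![-1,-1,-1,-1,-1,-1,1,1]]

set_option maxRecDepth 100000
set_option maxHeartbeats 16000000

def F240E8 : Finset (Fin 8 → ℤ) := ⟨(L240E8 : Multiset _), by decide⟩
def SfinE8 : Finset (Fin 8 → ℤ) := ⟨(SlistE8 : Multiset _), by decide⟩
def TfinE8 : Finset (Fin 8 → ℤ) := ⟨(TlistE8 : Multiset _), by decide⟩

lemma PhiZ_eq : PhiZ = F240E8 := by decide

lemma Sfin_eq : F240E8.filter (fun w => ipz w ThZ = -4) = SfinE8 := by decide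
lemma Tfin_eq : F240E8.filter (fun w => ipz w ThZ = 4) = TfinE8 := by decide

lemma keyE8 : ∀ A ∈ SfinE8, ∀ B ∈ SfinE8, ipz A B = 4 →
    (TfinE8.filter (fun w => ipz A w = 0 ∧ ipz w B = -4)).card = 10 := by decide

lemma toR_inj : Function.Injective toR := by
  intro a b h
  funext i
  have h2 : (a i : ℝ) / 2 = (b i : ℝ) / 2 := congrFun h i
  exact_mod_cast (by linarith : ((a i : ℝ)) = (b i : ℝ))

lemma ip_toR (a b : Fin 8 → ℤ) : ipE8 (toR a) (toR b) = (ipz a b : ℝ) / 4 := by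
  simp only [ipE8, toR, Fin.sum_univ_eight, ipz]
  push_cast
  ring

lemma theta_toR : thetaE8 = toR ThZ := by
  funext k
  simp only [thetaE8, toR, ThZ, Pi.add_apply, eE8, Pi.single_apply]
  fin_cases k <;> simp (config := { decide := true }) <;> norm_num

lemma pair_w_mem (i j : Fin 8) (hij : i < j) (b c : Bool) :
    (fun k => (if k = i then sgE8 b else 0) + (if k = j then sgE8 c else 0)) ∈ PhiZ := by
  apply Finset.mem_union_left
  exact Finset.mem_image.2 ⟨(i, j, b, c), Finset.mem_filter.2 ⟨Finset.mem_univ _, hij⟩, rfl⟩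

lemma pair_toR (i j : Fin 8) (b c : Bool) :
    toR (fun k => (if k = i then sgE8 b else 0) + (if k = j then sgE8 c else 0)) =
      (if b then (1:ℝ) else -1) • eE8 i + (if c then (1:ℝ) else -1) • eE8 j := by
  funext k
  simp only [toR, Pi.add_apply, Pi.smul_apply, eE8, Pi.single_apply, smul_eq_mul, sgE8]
  push_cast [apply_ite (Int.cast : ℤ → ℝ)]
  cases b <;> cases c <;> split_ifs <;> norm_num

lemma mem_phi_iff (γ : Fin 8 → ℝ) : γ ∈ PhiE8 ↔ ∃ w ∈ PhiZ, γ = toR w := by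
  classical
  constructor
  · rintro (⟨i, j, μ, ν, hij, hμ, hν, rfl⟩ | ⟨σ, hσ, heven, rfl⟩)
    · rcases hμ with rfl | rfl <;> rcases hν with rfl | rfl
      · exact ⟨_, pair_w_mem i j hij true true, by rw [pair_toR]; norm_num⟩
      · exact ⟨_, pair_w_mem i j hij true false, by rw [pair_toR]; norm_num⟩
      · exact ⟨_, pair_w_mem i j hij false true, by rw [pair_toR]; norm_num⟩
      · exact ⟨_, pair_w_mem i j hij false false, by rw [pair_toR]; norm_num⟩
    · set s : Fin 8 → Bool := fun i => if σ i = 1 then true else false with hs_def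
      have hs : ∀ i, (s i = false ↔ σ i = -1) := by
        intro i
        rcases hσ i with h | h <;> simp [hs_def, h] <;> norm_num
      refine ⟨fun i => if s i then (1:ℤ) else -1, ?_, ?_⟩
      · apply Finset.mem_union_right
        refine Finset.mem_image.2 ⟨s, Finset.mem_filter.2 ⟨Finset.mem_univ _, ?_⟩, rfl⟩
        have hcard : {i | σ i = -1}.ncard = (Finset.univ.filter (fun i => s i = false)).card := by
          rw [show {i | σ i = -1} = {i | s i = false} from Set.ext fun i => (hs i).symm,
            Set.ncard_eq_toFinset_card', Set.toFinset_setOf]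
        exact hcard ▸ heven
      · funext i
        simp only [toR, Pi.smul_apply, smul_eq_mul]
        rcases hσ i with h | h
        · have : s i = true := by simp [hs_def, h]
          rw [this, h]; norm_num
        · have : s i = false := (hs i).2 h
          rw [this, h]; norm_num
  · rintro ⟨w, hw, rfl⟩
    rcases Finset.mem_union.1 hw with h | h
    · obtain ⟨⟨i, j, b, c⟩, hp, rfl⟩ := Finset.mem_image.1 h
      have hij : i < j := (Finset.mem_filter.1 hp).2
      refine Or.inl ⟨i, j, if b then 1 else -1, if c then 1 else -1, hij,
        by cases b <;> simp, by cases c <;> simp, ?_⟩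
      exact pair_toR i j b c
    · obtain ⟨s, hsmem, rfl⟩ := Finset.mem_image.1 h
      refine Or.inr ⟨fun i => if s i then (1:ℝ) else -1,
        fun i => by cases hsi : s i <;> simp [hsi], ?_, ?_⟩
      · have heven := (Finset.mem_filter.1 hsmem).2
        have hset : {i | (if s i then (1:ℝ) else -1) = -1} = {i | s i = false} := by
          ext i; cases hsi : s i <;> simp [hsi] <;> norm_num
        rw [hset, Set.ncard_eq_toFinset_card', Set.toFinset_setOf]
        exact heven
      · funext i
        simp only [toR, Pi.smul_apply, smul_eq_mul]
        cases hsi : s i <;> simp [hsi] <;> norm_num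

/-- In `E₈`, for `α, β ∈ S_{-1/2}` with `(α|β) = 1`, the set
`X = {γ ∈ S_{1/2} : (α|γ) = 0, (γ|β) = -1}` has exactly `10 = h∨/3` elements. -/
theorem E8_case1_count (α β : Fin 8 → ℝ)
    (hα : α ∈ PhiE8) (hαθ : ipE8 α thetaE8 = -1)
    (hβ : β ∈ PhiE8) (hβθ : ipE8 β thetaE8 = -1)
    (hαβ : ipE8 α β = 1) :
    {γ | γ ∈ PhiE8 ∧ ipE8 γ thetaE8 = 1 ∧ ipE8 α γ = 0 ∧ ipE8 γ β = -1}.ncard = 10 := by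
  classical
  obtain ⟨A, hA, rfl⟩ := (mem_phi_iff α).1 hα
  obtain ⟨B, hB, rfl⟩ := (mem_phi_iff β).1 hβ
  rw [theta_toR, ip_toR] at hαθ hβθ
  rw [ip_toR] at hαβ
  have hAθ : ipz A ThZ = -4 := by exact_mod_cast (by linarith : (ipz A ThZ : ℝ) = -4)
  have hBθ : ipz B ThZ = -4 := by exact_mod_cast (by linarith : (ipz B ThZ : ℝ) = -4)
  have hAB : ipz A B = 4 := by exact_mod_cast (by linarith : (ipz A B : ℝ) = 4)
  have hset : {γ | γ ∈ PhiE8 ∧ ipE8 γ thetaE8 = 1 ∧ ipE8 (toR A) γ = 0 ∧ ipE8 γ (toR B) = -1}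
      = toR '' ↑(TfinE8.filter (fun w => ipz A w = 0 ∧ ipz w B = -4)) := by
    ext γ
    simp only [Set.mem_setOf_eq, Set.mem_image, Finset.mem_coe, Finset.mem_filter]
    constructor
    · rintro ⟨hγ, h1, h2, h3⟩
      obtain ⟨w, hw, rfl⟩ := (mem_phi_iff γ).1 hγ
      rw [theta_toR, ip_toR] at h1
      rw [ip_toR] at h2 h3
      refine ⟨w, ⟨?_, ?_, ?_⟩, rfl⟩
      · rw [← Tfin_eq, Finset.mem_filter, ← PhiZ_eq]
        exact ⟨hw, by exact_mod_cast (by linarith : (ipz w ThZ : ℝ) = 4)⟩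
      · exact_mod_cast (by linarith : (ipz A w : ℝ) = 0)
      · exact_mod_cast (by linarith : (ipz w B : ℝ) = -4)
    · rintro ⟨w, ⟨hwT, h2, h3⟩, rfl⟩
      have hwmem : w ∈ PhiZ ∧ ipz w ThZ = 4 := by
        rw [PhiZ_eq]
        exact Finset.mem_filter.1 ((Tfin_eq).symm ▸ hwT)
      refine ⟨(mem_phi_iff _).2 ⟨w, hwmem.1, rfl⟩, ?_, ?_, ?_⟩
      · rw [theta_toR, ip_toR, hwmem.2]; norm_num
      · rw [ip_toR, h2]; norm_num
      · rw [ip_toR, h3]; norm_num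
  rw [hset, Set.ncard_image_of_injective _ toR_inj, Set.ncard_coe_finset]
  have hAS : A ∈ SfinE8 := by
    rw [← Sfin_eq, Finset.mem_filter, ← PhiZ_eq]; exact ⟨hA, hAθ⟩
  have hBS : B ∈ SfinE8 := by
    rw [← Sfin_eq, Finset.mem_filter, ← PhiZ_eq]; exact ⟨hB, hBθ⟩
  exact keyE8 A hAS B hBS hAB
end

section
/- Let Φ(E₈) ⊂ ℝ⁸ be the E₈ root system with highest root θ = ε₇+ε₈, and S_{±1/2} = {γ ∈ Φ(E₈) : (γ|θ) = ±1}. For every pair α, β ∈ S_{-1/2} with (α|β) = 0, the set X = { γ ∈ S_{1/2} : (α|γ) = 0 and (γ|β) = -1 } satisfies Σ_{γ∈X} γ = 8θ + 4α - 4β (as a vector in ℝ⁸); in particular |X| = 16. -/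
/-!
Doubling coordinates turns `Φ(E₈)` into a finite set of integer vectors: the vectors
`±2εᵢ ± 2εⱼ` and the sign vectors with an even number of `-1`s. In these coordinates the sum
identity is a finite computation over the admissible pairs `(α, β)`. The count then follows by
pairing with `θ`: every `γ ∈ X` has `(γ|θ) = 1`, while `(8θ + 4α - 4β | θ) = 16 - 4 + 4 = 16`.
-/

open Finset

namespace E8

def signs : Finset ℤ := {1, -1}

def doubledShortRoots : Finset (Fin 8 → ℤ) :=
  ((univ.filter fun p : Fin 8 × Fin 8 => p.1 < p.2) ×ˢ (signs ×ˢ signs)).image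
    fun x => Pi.single x.1.1 (2 * x.2.1) + Pi.single x.1.2 (2 * x.2.2)

def doubledSpinorRoots : Finset (Fin 8 → ℤ) :=
  (Fintype.piFinset fun _ => signs).filter fun τ => Even #{i | τ i = -1}

def doubledRoots : Finset (Fin 8 → ℤ) := doubledShortRoots ∪ doubledSpinorRoots

def doubledTheta : Fin 8 → ℤ := Pi.single 6 2 + Pi.single 7 2

def doubledLevel (n : ℤ) : Finset (Fin 8 → ℤ) :=
  doubledRoots.filter fun c => c ⬝ᵥ doubledTheta = 4 * n

noncomputable def half : (Fin 8 → ℤ) →+ (Fin 8 → ℝ) :=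
  AddMonoidHom.mk' (fun c i => (c i : ℝ) / 2) fun c d => by ext; simp [add_div]

@[simp]
theorem half_apply (c : Fin 8 → ℤ) (i : Fin 8) : half c i = (c i : ℝ) / 2 := rfl

theorem half_injective : Function.Injective half := fun c d h => by
  ext i
  simpa using congrFun h i

theorem half_eq_smul (τ : Fin 8 → ℤ) : half τ = (1 / 2 : ℝ) • fun i => (τ i : ℝ) := by
  ext i
  simp [div_eq_inv_mul]

theorem half_single_two_mul (i : Fin 8) (m : ℤ) :
    half (Pi.single i (2 * m)) = (m : ℝ) • eE8 i := by
  ext k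
  by_cases h : k = i
  · subst h
    simp [eE8]
  · simp [eE8, h]

theorem half_doubledTheta : half doubledTheta = thetaE8 := by
  ext i
  fin_cases i <;> simp [doubledTheta, thetaE8, eE8]

theorem ipE8_eq_dotProduct (x y : Fin 8 → ℝ) : ipE8 x y = x ⬝ᵥ y := rfl

theorem ipE8_half (c d : Fin 8 → ℤ) : ipE8 (half c) (half d) = ((c ⬝ᵥ d : ℤ) : ℝ) / 4 := by
  simp only [ipE8, half_apply, dotProduct, Int.cast_sum, Int.cast_mul, Finset.sum_div]
  congr 1 with i
  ring

theorem ipE8_half_eq_iff {c d : Fin 8 → ℤ} {n : ℤ} :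
    ipE8 (half c) (half d) = n ↔ c ⬝ᵥ d = 4 * n := by
  rw [ipE8_half, div_eq_iff four_ne_zero, mul_comm]
  exact_mod_cast Iff.rfl

theorem ipE8_thetaE8_self : ipE8 thetaE8 thetaE8 = 2 := by
  rw [← half_doubledTheta, ipE8_half]
  norm_num [show doubledTheta ⬝ᵥ doubledTheta = 8 by decide]

theorem exists_mem_signs_iff {μ : ℝ} : (∃ m ∈ signs, (m : ℝ) = μ) ↔ μ = 1 ∨ μ = -1 := by
  constructor
  · rintro ⟨m, hm, rfl⟩
    rcases mem_insert.1 hm with rfl | hm <;> simp_all [signs]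
  · rintro (rfl | rfl)
    exacts [⟨1, by simp [signs]⟩, ⟨-1, by simp [signs]⟩]

theorem ncard_cast_eq_neg_one (τ : Fin 8 → ℤ) :
    {i | (τ i : ℝ) = -1}.ncard = #{i | τ i = -1} := by
  rw [← Set.ncard_coe_finset, coe_filter]
  norm_cast
  simp

theorem mem_half_image_doubledShortRoots {v : Fin 8 → ℝ} :
    v ∈ half '' doubledShortRoots ↔ ∃ (i j : Fin 8) (μ ν : ℝ), i < j ∧ (μ = 1 ∨ μ = -1) ∧
      (ν = 1 ∨ ν = -1) ∧ v = μ • eE8 i + ν • eE8 j := by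
  simp only [doubledShortRoots, coe_image, Set.mem_image, mem_coe, mem_product, mem_filter,
    mem_univ, true_and, Prod.exists, ← exists_mem_signs_iff]
  constructor
  · rintro ⟨_, ⟨i, j, m, n, ⟨hij, hm, hn⟩, rfl⟩, rfl⟩
    exact ⟨i, j, m, n, hij, ⟨m, hm, rfl⟩, ⟨n, hn, rfl⟩, by simp [half_single_two_mul]⟩
  · rintro ⟨i, j, _, _, hij, ⟨m, hm, rfl⟩, ⟨n, hn, rfl⟩, rfl⟩
    exact ⟨_, ⟨i, j, m, n, ⟨hij, hm, hn⟩, rfl⟩, by simp [half_single_two_mul]⟩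

theorem mem_half_image_doubledSpinorRoots {v : Fin 8 → ℝ} :
    v ∈ half '' doubledSpinorRoots ↔ ∃ σ : Fin 8 → ℝ, (∀ i, σ i = 1 ∨ σ i = -1) ∧
      Even {i | σ i = -1}.ncard ∧ v = (1 / 2 : ℝ) • σ := by
  simp only [doubledSpinorRoots, coe_filter, Set.mem_image, Set.mem_ofPred_eq,
    Fintype.mem_piFinset, ← exists_mem_signs_iff]
  constructor
  · rintro ⟨τ, ⟨hτ, heven⟩, rfl⟩
    exact ⟨_, fun i => ⟨τ i, hτ i, rfl⟩, by rwa [ncard_cast_eq_neg_one], half_eq_smul τ⟩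
  · rintro ⟨σ, hσ, heven, rfl⟩
    choose τ hτ hτσ using hσ
    obtain rfl : (fun i => (τ i : ℝ)) = σ := funext hτσ
    exact ⟨τ, ⟨hτ, by rwa [ncard_cast_eq_neg_one] at heven⟩, half_eq_smul τ⟩

theorem PhiE8_eq_image_half : PhiE8 = half '' doubledRoots := by
  ext v
  rw [doubledRoots, coe_union, Set.image_union, Set.mem_union, mem_half_image_doubledShortRoots,
    mem_half_image_doubledSpinorRoots]
  rfl

theorem mem_PhiE8_and_ipE8_thetaE8_iff {v : Fin 8 → ℝ} {n : ℤ} :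
    v ∈ PhiE8 ∧ ipE8 v thetaE8 = n ↔ ∃ c ∈ doubledLevel n, half c = v := by
  rw [PhiE8_eq_image_half, ← half_doubledTheta]
  constructor
  · rintro ⟨⟨c, hc, rfl⟩, hn⟩
    exact ⟨c, mem_filter.2 ⟨hc, ipE8_half_eq_iff.1 hn⟩, rfl⟩
  · rintro ⟨c, hc, rfl⟩
    obtain ⟨hc, hn⟩ := mem_filter.1 hc
    exact ⟨⟨c, hc, rfl⟩, ipE8_half_eq_iff.2 hn⟩

theorem setOf_case2_eq_image_half (a b : Fin 8 → ℤ) :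
    {γ | γ ∈ PhiE8 ∧ ipE8 γ thetaE8 = 1 ∧ ipE8 (half a) γ = 0 ∧ ipE8 γ (half b) = -1}
      = half '' ↑{c ∈ doubledLevel 1 | a ⬝ᵥ c = 0 ∧ c ⬝ᵥ b = -4} := by
  ext γ
  constructor
  · rintro ⟨hγ, hγθ, h0, h1⟩
    obtain ⟨c, hc, rfl⟩ :=
      (mem_PhiE8_and_ipE8_thetaE8_iff (n := 1)).1 ⟨hγ, by exact_mod_cast hγθ⟩
    refine ⟨c, mem_filter.2 ⟨hc, ?_, ?_⟩, rfl⟩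
    · simpa using (ipE8_half_eq_iff (n := 0)).1 (by exact_mod_cast h0)
    · simpa using (ipE8_half_eq_iff (n := -1)).1 (by exact_mod_cast h1)
  · rintro ⟨c, hc, rfl⟩
    obtain ⟨hc, h0, h1⟩ := mem_filter.1 hc
    obtain ⟨hγ, hγθ⟩ := mem_PhiE8_and_ipE8_thetaE8_iff.2 ⟨c, hc, rfl⟩
    refine ⟨hγ, by exact_mod_cast hγθ, ?_, ?_⟩
    · exact_mod_cast (ipE8_half_eq_iff (n := 0)).2 (by simpa using h0)
    · exact_mod_cast (ipE8_half_eq_iff (n := -1)).2 (by simpa using h1)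

theorem sum_doubledLevel_filter_eq :
    ∀ a ∈ doubledLevel (-1), ∀ b ∈ doubledLevel (-1), a ⬝ᵥ b = 0 →
      ∑ c ∈ doubledLevel 1 with a ⬝ᵥ c = 0 ∧ c ⬝ᵥ b = -4, c
        = 8 • doubledTheta + 4 • a - 4 • b := by
  decide +kernel

theorem ncard_eq_ipE8_finsum {X : Set (Fin 8 → ℝ)} (hX : X.Finite) {w : Fin 8 → ℝ}
    (h : ∀ γ ∈ X, ipE8 γ w = 1) : (X.ncard : ℝ) = ipE8 (∑ᶠ γ ∈ X, γ) w := by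
  rw [finsum_mem_eq_finite_toFinset_sum _ hX, Set.ncard_eq_toFinset_card X hX,
    ipE8_eq_dotProduct, sum_dotProduct, card_eq_sum_ones, Nat.cast_sum]
  exact sum_congr rfl fun γ hγ => by
    rw [Nat.cast_one, ← h γ (hX.mem_toFinset.1 hγ), ipE8_eq_dotProduct]

end E8

open E8

/-- In `E₈`, for `α, β ∈ S_{-1/2}` with `(α|β) = 0`, the set
`X = {γ ∈ S_{1/2} : (α|γ) = 0, (γ|β) = -1}` satisfies
`∑_{γ ∈ X} γ = 8θ + 4α - 4β`; in particular `|X| = 16`. -/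
theorem E8_case2_sum (α β : Fin 8 → ℝ)
    (hα : α ∈ PhiE8) (hαθ : ipE8 α thetaE8 = -1)
    (hβ : β ∈ PhiE8) (hβθ : ipE8 β thetaE8 = -1)
    (hαβ : ipE8 α β = 0) :
    (∑ᶠ γ ∈ {γ | γ ∈ PhiE8 ∧ ipE8 γ thetaE8 = 1 ∧ ipE8 α γ = 0 ∧ ipE8 γ β = -1}, γ)
      = (8 : ℝ) • thetaE8 + (4 : ℝ) • α - (4 : ℝ) • β ∧
    {γ | γ ∈ PhiE8 ∧ ipE8 γ thetaE8 = 1 ∧ ipE8 α γ = 0 ∧ ipE8 γ β = -1}.ncard = 16 := by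
  obtain ⟨a, ha, rfl⟩ :=
    (mem_PhiE8_and_ipE8_thetaE8_iff (n := -1)).1 ⟨hα, by exact_mod_cast hαθ⟩
  obtain ⟨b, hb, rfl⟩ :=
    (mem_PhiE8_and_ipE8_thetaE8_iff (n := -1)).1 ⟨hβ, by exact_mod_cast hβθ⟩
  have hab : a ⬝ᵥ b = 0 := by simpa using (ipE8_half_eq_iff (n := 0)).1 (by exact_mod_cast hαβ)
  set X := {γ | γ ∈ PhiE8 ∧ ipE8 γ thetaE8 = 1 ∧ ipE8 (half a) γ = 0 ∧ ipE8 γ (half b) = -1}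
  have hX : X = half '' ↑{c ∈ doubledLevel 1 | a ⬝ᵥ c = 0 ∧ c ⬝ᵥ b = -4} :=
    setOf_case2_eq_image_half a b
  have hsum : ∑ᶠ γ ∈ X, γ = (8 : ℝ) • thetaE8 + (4 : ℝ) • half a - (4 : ℝ) • half b := by
    rw [hX, finsum_mem_image half_injective.injOn, finsum_mem_coe_finset, ← map_sum,
      sum_doubledLevel_filter_eq a ha b hb hab, map_sub, map_add, map_nsmul, map_nsmul,
      map_nsmul, half_doubledTheta]
    simp only [← Nat.cast_smul_eq_nsmul ℝ, Nat.cast_ofNat]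
  refine ⟨hsum, ?_⟩
  have hcard := ncard_eq_ipE8_finsum (hX ▸ Set.toFinite _ : X.Finite) (w := thetaE8)
    fun γ hγ => hγ.2.1
  have hpair : ipE8 ((8 : ℝ) • thetaE8 + (4 : ℝ) • half a - (4 : ℝ) • half b) thetaE8
      = 8 * ipE8 thetaE8 thetaE8 + 4 * ipE8 (half a) thetaE8 - 4 * ipE8 (half b) thetaE8 := by
    simp only [ipE8_eq_dotProduct, sub_dotProduct, add_dotProduct, smul_dotProduct, smul_eq_mul]
  rw [hsum, hpair, ipE8_thetaE8_self, hαθ, hβθ] at hcard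
  norm_num at hcard
  exact_mod_cast hcard
end

section
/- Let L(c,0) ⊕ L(c,h) be the ℤ/2ℤ simple current extension of the Virasoro minimal model M(3,p) with c = 1 - 6(3-p)²/(3p), h = (p-2)/4, and intertwining operator I normalized by z^{2h}I(|h⟩,z)|h⟩|_{z=0} = |0⟩. Then the resulting ℤ/2ℤ-charged quasi generalized vertex algebra has commutation factor Ω satisfying Ω(0,0)=Ω(0,1)=Ω(1,0)=1 and Ω(1,1) = e^{-2πih}. -/
open Complex

/-- For the `ℤ/2ℤ` simple current extension `L(c,0) ⊕ L(c,h)` of the Virasoro minimal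
model `M(3,p)` (`c = 1 - 6(3-p)²/(3p)`, `h = (p-2)/4`), with the intertwining operator
normalized so that `z^{2h} I(|h⟩,z)|h⟩` has nonzero constant term, the commutation
factor `Ω` of the resulting `ℤ₂`-charged quasi generalized vertex algebra satisfies
`Ω(0,0) = Ω(0,1) = Ω(1,0) = 1` and `Ω(1,1) = e^{-2πih}`.

The extension is modeled by its mode expansion `Y : W → ℂ → W → W`
(`Y a n b = a(n)b`), the `ℤ₂`-grading `grade`, the translation operator `D`, and the
abelian intertwining algebra structure is encoded through the skew-symmetry identity
(coefficientwise form of `Y(a,z)b = Ω(α,β) e^{z∂} Y(b, e^{-πi}z) a`). -/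
theorem minimal_model_extension_Omega
    (p : ℕ) (hp : 3 < p) (hcop : Nat.Coprime 3 p)
    (c h : ℂ) (hc : c = 1 - 6 * ((3 : ℂ) - p) ^ 2 / (3 * p)) (hh : h = ((p : ℂ) - 2) / 4)
    (W : Type*) [AddCommGroup W] [Module ℂ W]
    (grade : ZMod 2 → Submodule ℂ W)
    (Y : W → ℂ → W → W) (vac : W) (D : W →ₗ[ℂ] W)
    (Ω : ZMod 2 → ZMod 2 → ℂˣ)
    (hΩnorm : ∀ i : ZMod 2, Ω i 0 = 1 ∧ Ω 0 i = 1)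
    -- skew-symmetry of the abelian intertwining algebra, coefficientwise:
    (hskew : ∀ (α β : ZMod 2), ∀ a ∈ grade α, ∀ b ∈ grade β, ∀ n : ℂ,
      Y a n b = (Ω α β : ℂ) • Complex.exp (Real.pi * Complex.I * (n + 1)) •
        ∑ᶠ j : ℕ, (((-1 : ℂ) ^ j / (j.factorial : ℂ)) • (⇑D)^[j] (Y b (n + j) a)))
    -- the highest weight vector `v = |h⟩` of the simple current, with
    -- `z^{2h} I(v,z)v ∈ V[[z]]` and nonzero constant term, normalized to `|0⟩`:
    (v : W) (hv : v ∈ grade 1)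
    (hIreg : ∀ n : ℂ, Y v n v ≠ 0 → ∃ m : ℕ, n = (2 * h - 1) - m)
    (hInorm : Y v (2 * h - 1) v = vac) (hvacne : vac ≠ 0) :
    Ω 0 0 = 1 ∧ Ω 0 1 = 1 ∧ Ω 1 0 = 1 ∧
    (Ω 1 1 : ℂ) = Complex.exp (-(2 * Real.pi * Complex.I) * h) := by
  refine ⟨(hΩnorm 0).1, (hΩnorm 1).2, (hΩnorm 1).1, ?_⟩
  have hzero : ∀ j : ℕ, j ≠ 0 → Y v ((2 * h - 1) + j) v = 0 := by
    intro j hj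
    by_contra hne
    obtain ⟨m, hm⟩ := hIreg _ hne
    have : (j : ℂ) + (m : ℂ) = 0 := by linear_combination hm
    have : (j : ℕ) + m = 0 := by exact_mod_cast this
    exact hj (Nat.eq_zero_of_add_eq_zero_right this)
  have hkey := hskew 1 1 v hv v hv (2 * h - 1)
  have hsum : (∑ᶠ j : ℕ, (((-1 : ℂ) ^ j / (j.factorial : ℂ)) •
      (⇑D)^[j] (Y v ((2 * h - 1) + j) v))) = vac := by
    rw [finsum_eq_single _ 0]
    · simp [hInorm]
    · intro j hj
      rw [hzero j hj]
      simp
  rw [hsum, hInorm] at hkey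
  have harith : Real.pi * Complex.I * (2 * h - 1 + 1) = 2 * Real.pi * Complex.I * h := by
    ring
  rw [harith] at hkey
  have hexp : Complex.exp (2 * Real.pi * Complex.I * h) ≠ 0 := Complex.exp_ne_zero _
  have hsc : ((Ω 1 1 : ℂ) * Complex.exp (2 * Real.pi * Complex.I * h) - 1) • vac = 0 := by
    rw [sub_smul, one_smul, mul_smul]
    rw [← hkey]
    simp
  have h1 : (Ω 1 1 : ℂ) * Complex.exp (2 * Real.pi * Complex.I * h) = 1 := by
    by_contra hne
    exact hvacne (by simpa [sub_eq_zero, hne] using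
      (smul_eq_zero.mp hsc).resolve_left (sub_ne_zero.mpr hne))
  rw [show -(2 * Real.pi * Complex.I) * h = -(2 * Real.pi * Complex.I * h) by ring,
    Complex.exp_neg]
  exact eq_inv_of_mul_eq_one_left h1
end
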